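/- Let R be a commutative integral domain with fraction field K, and C_s, C₀ ∈ K^{m×n}, P ∈ K^{n×m}, with P₀ = P(I-C_sP)⁻¹. If C_s stabilizes P and C₀ stabilizes P₀, then C_s + C₀ stabilizes P, i.e. all four closed-loop transfer matrices of the pair (P, C_s+C₀) have entries in R. -/

import Mathlib

open Matrix

/-- A matrix over the fraction field is *stable* if all its entries lie in `R`. -/
def MatStable (R : Type*) [CommRing R] [IsDomain R] {α β : Type*}
    (M : Matrix α β (FractionRing R)) : Prop :=
  ∀ i j, ∃ r : R, algebraMap R (FractionRing R) r = M i j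

/-- `C` stabilizes `P`: the four closed-loop transfer matrices are stable. -/
def Stabilizes (R : Type*) [CommRing R] [IsDomain R] {n m : ℕ}
    (P : Matrix (Fin n) (Fin m) (FractionRing R))
    (C : Matrix (Fin m) (Fin n) (FractionRing R)) : Prop :=
  (1 - P * C).det ≠ 0 ∧ (1 - C * P).det ≠ 0 ∧
    MatStable R (1 - P * C)⁻¹ ∧ MatStable R ((1 - P * C)⁻¹ * P) ∧
    MatStable R (C * (1 - P * C)⁻¹) ∧ MatStable R (1 - C * P)⁻¹

/-!
With `A = 1 - P Cs`, `B = 1 - Cs P` and `P₀ = P B⁻¹`, the loop with `Cs + C₀` factors through the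
two given loops: `1 - P (Cs + C₀) = A (1 - P₀ C₀)` and `1 - (Cs + C₀) P = (1 - C₀ P₀) B`. Hence three
of the closed-loop matrices are products of stable ones, and the remaining one is
`(Cs + C₀) (1 - P (Cs + C₀))⁻¹ = Cs A⁻¹ + B⁻¹ C₀ (1 - P₀ C₀)⁻¹ A⁻¹`.
-/

namespace Matrix

variable {K : Type*} [CommRing K] {n m : Type*} [Fintype n] [Fintype m]
  (P : Matrix n m K) (C : Matrix m n K)

theorem one_sub_mul_mul_comm [DecidableEq n] [DecidableEq m] :
    (1 - P * C) * P = P * (1 - C * P) := by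
  simp only [Matrix.sub_mul, Matrix.mul_sub, Matrix.one_mul, Matrix.mul_one, Matrix.mul_assoc]

theorem one_sub_mul_mul_mul_inv [DecidableEq n] [DecidableEq m] (hB : IsUnit (1 - C * P).det) :
    (1 - P * C) * (P * (1 - C * P)⁻¹) = P := by
  rw [← Matrix.mul_assoc, one_sub_mul_mul_comm, Matrix.mul_assoc, mul_nonsing_inv _ hB,
    Matrix.mul_one]

theorem mul_mul_inv_one_sub_mul_add_one [DecidableEq m] (hB : IsUnit (1 - C * P).det) :
    C * (P * (1 - C * P)⁻¹) + 1 = (1 - C * P)⁻¹ := by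
  have hB' : (1 - C * P) * (1 - C * P)⁻¹ = 1 := mul_nonsing_inv _ hB
  rw [Matrix.sub_mul, Matrix.one_mul, Matrix.mul_assoc] at hB'
  exact (sub_eq_iff_eq_add'.mp hB').symm

theorem inv_one_sub_mul_eq_one_add [DecidableEq n] (hA : IsUnit (1 - P * C).det) :
    (1 - P * C)⁻¹ = 1 + P * (C * (1 - P * C)⁻¹) := by
  have hA' : (1 - P * C) * (1 - P * C)⁻¹ = 1 := mul_nonsing_inv _ hA
  rw [Matrix.sub_mul, Matrix.one_mul, Matrix.mul_assoc] at hA'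
  exact sub_eq_iff_eq_add.mp hA'

variable (C₀ : Matrix m n K)

theorem one_sub_mul_add_eq_mul [DecidableEq n] [DecidableEq m] (hB : IsUnit (1 - C * P).det) :
    1 - P * (C + C₀) = (1 - P * C) * (1 - P * (1 - C * P)⁻¹ * C₀) := by
  rw [Matrix.mul_sub, Matrix.mul_one, ← Matrix.mul_assoc, one_sub_mul_mul_mul_inv _ _ hB,
    Matrix.mul_add]
  abel

theorem one_sub_add_mul_eq_mul [DecidableEq m] (hB : IsUnit (1 - C * P).det) :
    1 - (C + C₀) * P = (1 - C₀ * (P * (1 - C * P)⁻¹)) * (1 - C * P) := by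
  rw [Matrix.sub_mul, Matrix.one_mul, Matrix.mul_assoc, Matrix.mul_assoc,
    nonsing_inv_mul _ hB, Matrix.mul_one, Matrix.add_mul]
  abel

theorem add_mul_inv_one_sub_mul [DecidableEq n] [DecidableEq m] (hB : IsUnit (1 - C * P).det)
    (hA₀ : IsUnit (1 - P * (1 - C * P)⁻¹ * C₀).det) :
    (C + C₀) * (1 - P * (1 - C * P)⁻¹ * C₀)⁻¹ =
      C + (1 - C * P)⁻¹ * (C₀ * (1 - P * (1 - C * P)⁻¹ * C₀)⁻¹) := by
  set A₀ := 1 - P * (1 - C * P)⁻¹ * C₀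
  calc (C + C₀) * A₀⁻¹ = C * (1 + P * (1 - C * P)⁻¹ * (C₀ * A₀⁻¹)) + C₀ * A₀⁻¹ := by
        rw [Matrix.add_mul, ← inv_one_sub_mul_eq_one_add _ _ hA₀]
    _ = C + (C * (P * (1 - C * P)⁻¹) + 1) * (C₀ * A₀⁻¹) := by
        rw [Matrix.mul_add, Matrix.mul_one, Matrix.add_mul, Matrix.one_mul, add_assoc,
          Matrix.mul_assoc, Matrix.mul_assoc, Matrix.mul_assoc]
    _ = C + (1 - C * P)⁻¹ * (C₀ * A₀⁻¹) := by
        rw [mul_mul_inv_one_sub_mul_add_one _ _ hB]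

end Matrix

section MatStable

variable {R : Type*} [CommRing R] [IsDomain R] {α β γ : Type*}

theorem matStable_iff (M : Matrix α β (FractionRing R)) :
    MatStable R M ↔ ∀ i j, M i j ∈ (algebraMap R (FractionRing R)).range := by
  simp [MatStable, RingHom.mem_range]

theorem MatStable.mul [Fintype β] {M : Matrix α β (FractionRing R)}
    {N : Matrix β γ (FractionRing R)} (hM : MatStable R M) (hN : MatStable R N) :
    MatStable R (M * N) := by
  rw [matStable_iff] at *
  intro i j
  rw [Matrix.mul_apply]
  exact Subring.sum_mem _ fun k _ => mul_mem (hM i k) (hN k j)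

theorem MatStable.add {M N : Matrix α β (FractionRing R)}
    (hM : MatStable R M) (hN : MatStable R N) : MatStable R (M + N) := by
  rw [matStable_iff] at *
  exact fun i j => add_mem (hM i j) (hN i j)

end MatStable

theorem stmt12 (R : Type*) [CommRing R] [IsDomain R] (n m : ℕ)
    (P : Matrix (Fin n) (Fin m) (FractionRing R))
    (Cs C₀ : Matrix (Fin m) (Fin n) (FractionRing R))
    (P₀ : Matrix (Fin n) (Fin m) (FractionRing R))
    (hP₀ : P₀ = P * (1 - Cs * P)⁻¹)
    (hs : Stabilizes R P Cs) (h0 : Stabilizes R P₀ C₀) :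
    Stabilizes R P (Cs + C₀) := by
  subst hP₀
  obtain ⟨hA, hB, sA, sAP, sCA, sB⟩ := hs
  obtain ⟨hA₀, hB₀, sA₀, -, sCA₀, sB₀⟩ := h0
  have hB' : IsUnit (1 - Cs * P).det := isUnit_iff_ne_zero.mpr hB
  have hA₀' := isUnit_iff_ne_zero.mpr hA₀
  unfold Stabilizes
  rw [one_sub_mul_add_eq_mul _ _ _ hB', one_sub_add_mul_eq_mul _ _ _ hB', det_mul, det_mul,
    Matrix.mul_inv_rev, Matrix.mul_inv_rev]
  refine ⟨mul_ne_zero hA hA₀, mul_ne_zero hB₀ hB, sA₀.mul sA, ?_, ?_, sB.mul sB₀⟩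
  · rw [Matrix.mul_assoc]
    exact sA₀.mul sAP
  · rw [← Matrix.mul_assoc, add_mul_inv_one_sub_mul _ _ _ hB' hA₀', Matrix.add_mul,
      Matrix.mul_assoc]
    exact sCA.add (sB.mul (sCA₀.mul sA))
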